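/- arXiv:1909.00116 — 3 statements merged into one kernel-verified Lean document; each statement's English description precedes it below -/
import Mathlib

section
/- Let U ∈ ℝ^{d₁×r}, V ∈ ℝ^{d₂×r} have orthonormal columns, with orthogonal complements U_⊥, V_⊥ such that UUᵀ + U_⊥U_⊥ᵀ = I and VVᵀ + V_⊥V_⊥ᵀ = I. Let X be uniformly distributed over the canonical basis {e_{j₁}e_{j₂}ᵀ} of ℝ^{d₁×d₂} and fix T ∈ ℝ^{d₁×d₂}. Then E[⟨U_⊥U_⊥ᵀ X VVᵀ, T⟩ · ⟨UUᵀ X V_⊥V_⊥ᵀ, T⟩] = 0. -/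
open Matrix BigOperators

noncomputable def frob {m n : Type*} [Fintype m] [Fintype n]
    (A : Matrix m n ℝ) : ℝ :=
  Real.sqrt (∑ i, ∑ j, (A i j) ^ 2)

noncomputable def opN {m n : Type*} [Fintype m] [Fintype n] [DecidableEq n]
    (A : Matrix m n ℝ) : ℝ :=
  ‖(LinearMap.toContinuousLinearMap (Matrix.toEuclideanLin A))‖

noncomputable def twoMax {m n : Type*} [Fintype m] [Fintype n]
    (A : Matrix m n ℝ) : ℝ :=
  ⨆ i, Real.sqrt (∑ j, (A i j) ^ 2)

noncomputable def maxN {m n : Type*} [Fintype m] [Fintype n]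
    (A : Matrix m n ℝ) : ℝ :=
  ⨆ i, ⨆ j, |A i j|

noncomputable def l1 {m n : Type*} [Fintype m] [Fintype n]
    (A : Matrix m n ℝ) : ℝ :=
  ∑ i, ∑ j, |A i j|

set_option maxRecDepth 4000 in
theorem keylem {m n p q : Type*} [Fintype m] [Fintype n] [Fintype p] [Fintype q]
    [DecidableEq m] [DecidableEq n]
    (A : Matrix p m ℝ) (B : Matrix n q ℝ) (T : Matrix p q ℝ) (i : m) (j : n) :
    Matrix.trace ((A * Matrix.single i j (1 : ℝ) * B)ᵀ * T)
      = (Aᵀ * T * Bᵀ) i j := by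
  simp only [Matrix.trace, Matrix.diag, Matrix.mul_apply, Matrix.transpose_apply,
    Matrix.single, Matrix.of_apply, ite_mul, zero_mul, mul_ite, mul_zero,
    one_mul, mul_one, ite_and, Finset.sum_ite_irrel, Finset.sum_ite_eq, Finset.sum_ite_eq',
    Finset.mem_univ, if_true, Finset.mul_sum, Finset.sum_mul]
  refine Finset.sum_congr rfl fun a _ => Finset.sum_congr rfl fun b _ => mul_right_comm _ _ _


/-- the cross term vanishes:
E[⟨U⊥U⊥ᵀ X VVᵀ, T⟩ ⟨UUᵀ X V⊥V⊥ᵀ, T⟩] = 0. -/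
theorem stmt12 (d₁ d₂ r : ℕ) (hd₁ : 0 < d₁) (hd₂ : 0 < d₂)
    (T : Matrix (Fin d₁) (Fin d₂) ℝ)
    (U : Matrix (Fin d₁) (Fin r) ℝ) (Uperp : Matrix (Fin d₁) (Fin (d₁ - r)) ℝ)
    (V : Matrix (Fin d₂) (Fin r) ℝ) (Vperp : Matrix (Fin d₂) (Fin (d₂ - r)) ℝ)
    (hU : Uᵀ * U = 1) (hV : Vᵀ * V = 1)
    (hUo : Uᵀ * Uperp = 0) (hVo : Vᵀ * Vperp = 0)
    (hUc : U * Uᵀ + Uperp * Uperpᵀ = 1)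
    (hVc : V * Vᵀ + Vperp * Vperpᵀ = 1) :
    (1 / ((d₁ : ℝ) * d₂)) *
      ∑ j₁ : Fin d₁, ∑ j₂ : Fin d₂,
        Matrix.trace ((Uperp * Uperpᵀ * Matrix.single j₁ j₂ (1 : ℝ) *
            V * Vᵀ)ᵀ * T) *
          Matrix.trace ((U * Uᵀ * Matrix.single j₁ j₂ (1 : ℝ) *
            Vperp * Vperpᵀ)ᵀ * T) = 0 := by
  have hperp : Uperpᵀ * U = 0 := by
    have := congrArg Matrix.transpose hUo
    simpa using this
  set M1 : Matrix (Fin d₁) (Fin d₂) ℝ := (Uperp * Uperpᵀ)ᵀ * T * (V * Vᵀ)ᵀ with hM1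
  set M2 : Matrix (Fin d₁) (Fin d₂) ℝ := (U * Uᵀ)ᵀ * T * (Vperp * Vperpᵀ)ᵀ with hM2
  have key : ∀ (j₁ : Fin d₁) (j₂ : Fin d₂),
      Matrix.trace ((Uperp * Uperpᵀ * Matrix.single j₁ j₂ (1 : ℝ) *
            V * Vᵀ)ᵀ * T) *
          Matrix.trace ((U * Uᵀ * Matrix.single j₁ j₂ (1 : ℝ) *
            Vperp * Vperpᵀ)ᵀ * T) = M1 j₁ j₂ * M2 j₁ j₂ := by
    intro j₁ j₂
    rw [Matrix.mul_assoc (Uperp * Uperpᵀ * Matrix.single j₁ j₂ (1 : ℝ)) V Vᵀ,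
      Matrix.mul_assoc (U * Uᵀ * Matrix.single j₁ j₂ (1 : ℝ)) Vperp Vperpᵀ,
      keylem, keylem]
  have hM : M1ᵀ * M2 = 0 := by
    have h2 : ∀ (X : Matrix (Fin r) (Fin d₂) ℝ), Uperpᵀ * (U * X) = 0 := fun X => by
      rw [← Matrix.mul_assoc, hperp, Matrix.zero_mul]
    simp [hM1, hM2, Matrix.transpose_mul, Matrix.transpose_transpose, Matrix.mul_assoc, h2]
  have hsum : ∑ j₁ : Fin d₁, ∑ j₂ : Fin d₂, M1 j₁ j₂ * M2 j₁ j₂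
      = Matrix.trace (M1ᵀ * M2) := by
    rw [Finset.sum_comm]
    simp [Matrix.trace, Matrix.diag, Matrix.mul_apply]
  calc (1 / ((d₁ : ℝ) * d₂)) * ∑ j₁ : Fin d₁, ∑ j₂ : Fin d₂,
        Matrix.trace ((Uperp * Uperpᵀ * Matrix.single j₁ j₂ (1 : ℝ) *
            V * Vᵀ)ᵀ * T) *
          Matrix.trace ((U * Uᵀ * Matrix.single j₁ j₂ (1 : ℝ) *
            Vperp * Vperpᵀ)ᵀ * T)
      = (1 / ((d₁ : ℝ) * d₂)) * ∑ j₁ : Fin d₁, ∑ j₂ : Fin d₂, M1 j₁ j₂ * M2 j₁ j₂ := by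
        congr 1
        exact Finset.sum_congr rfl fun j₁ _ => Finset.sum_congr rfl fun j₂ _ => key j₁ j₂
    _ = 0 := by rw [hsum, hM]; simp
end

section
/- In the setting where U, U_⊥, V, V_⊥ are as above and X is uniformly distributed on the canonical basis of ℝ^{d₁×d₂}, for any fixed T ∈ ℝ^{d₁×d₂}: E[⟨U_⊥U_⊥ᵀ X VVᵀ, T⟩²] = ‖U_⊥ᵀ T V‖_F² / (d₁d₂). Consequently, E[(⟨U_⊥U_⊥ᵀXVVᵀ, T⟩ + ⟨UUᵀXV_⊥V_⊥ᵀ, T⟩)²] = (‖U_⊥ᵀTV‖_F² + ‖UᵀTV_⊥‖_F²)/(d₁d₂). -/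
open Matrix BigOperators

lemma sum_mul_eq_trace {m n : Type*} [Fintype m] [Fintype n]
    (A B : Matrix m n ℝ) :
    ∑ i, ∑ j, A i j * B i j = Matrix.trace (Aᵀ * B) := by
  simp [Matrix.trace, Matrix.diag, Matrix.mul_apply]
  exact Finset.sum_comm

lemma sum_sq_eq_trace {m n : Type*} [Fintype m] [Fintype n]
    (A : Matrix m n ℝ) :
    ∑ i, ∑ j, (A i j) ^ 2 = Matrix.trace (Aᵀ * A) := by
  simpa [sq] using sum_mul_eq_trace A A

lemma frob_sq_trace {m n : Type*} [Fintype m] [Fintype n]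
    (A : Matrix m n ℝ) :
    frob A ^ 2 = Matrix.trace (Aᵀ * A) := by
  rw [frob, Real.sq_sqrt (by positivity), sum_sq_eq_trace]

lemma entry_std {d₁ d₂ : ℕ} (P : Matrix (Fin d₁) (Fin d₁) ℝ)
    (Q : Matrix (Fin d₂) (Fin d₂) ℝ) (j₁ : Fin d₁) (j₂ : Fin d₂)
    (i : Fin d₁) (j : Fin d₂) :
    (P * Matrix.single j₁ j₂ (1:ℝ) * Q) i j = P i j₁ * Q j₂ j := by
  simp [Matrix.mul_apply, Matrix.single, ite_and, mul_ite, ite_mul,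
    Finset.sum_ite_eq, Finset.sum_ite_eq']

lemma trace_term {d₁ d₂ : ℕ} (P : Matrix (Fin d₁) (Fin d₁) ℝ)
    (Q : Matrix (Fin d₂) (Fin d₂) ℝ) (T : Matrix (Fin d₁) (Fin d₂) ℝ)
    (j₁ : Fin d₁) (j₂ : Fin d₂) :
    Matrix.trace ((P * Matrix.single j₁ j₂ (1:ℝ) * Q)ᵀ * T)
      = (Pᵀ * T * Qᵀ) j₁ j₂ := by
  rw [← sum_mul_eq_trace]
  simp only [entry_std]
  rw [Finset.sum_comm]
  simp only [Matrix.mul_apply, Matrix.transpose_apply, Finset.sum_mul]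
  refine Finset.sum_congr rfl fun j _ => ?_
  refine Finset.sum_congr rfl fun i _ => ?_
  ring

lemma key_trace {d₁ d₂ k l : ℕ} (T : Matrix (Fin d₁) (Fin d₂) ℝ)
    (A : Matrix (Fin d₁) (Fin k) ℝ) (B : Matrix (Fin d₂) (Fin l) ℝ)
    (P : Matrix (Fin d₁) (Fin d₁) ℝ) (Q : Matrix (Fin d₂) (Fin d₂) ℝ)
    (hPT : Pᵀ = P) (hQT : Qᵀ = Q) (hP : P * P = P) (hQ : Q * Q = Q)
    (hPA : P = A * Aᵀ) (hQB : Q = B * Bᵀ) :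
    Matrix.trace ((P * T * Q)ᵀ * (P * T * Q))
      = Matrix.trace ((Aᵀ * T * B)ᵀ * (Aᵀ * T * B)) := by
  have l1 : Matrix.trace ((P * T * Q)ᵀ * (P * T * Q))
      = Matrix.trace (Q * (Tᵀ * (P * T))) := by
    calc Matrix.trace ((P * T * Q)ᵀ * (P * T * Q))
        = Matrix.trace ((Q * (Tᵀ * P) * (P * T)) * Q) := by
          congr 1
          simp [Matrix.transpose_mul, hPT, hQT, Matrix.mul_assoc]
      _ = Matrix.trace (Q * (Q * (Tᵀ * P) * (P * T))) := Matrix.trace_mul_comm _ _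
      _ = Matrix.trace ((Q * Q) * ((Tᵀ * P) * (P * T))) := by
          congr 1; simp [Matrix.mul_assoc]
      _ = Matrix.trace (Q * ((Tᵀ * P) * (P * T))) := by rw [hQ]
      _ = Matrix.trace (Q * (Tᵀ * ((P * P) * T))) := by
          congr 1; simp [Matrix.mul_assoc]
      _ = Matrix.trace (Q * (Tᵀ * (P * T))) := by rw [hP]
  have l2 : Matrix.trace ((Aᵀ * T * B)ᵀ * (Aᵀ * T * B))
      = Matrix.trace (Q * (Tᵀ * (P * T))) := by
    calc Matrix.trace ((Aᵀ * T * B)ᵀ * (Aᵀ * T * B))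
        = Matrix.trace ((Bᵀ * (Tᵀ * A) * (Aᵀ * T)) * B) := by
          congr 1; simp [Matrix.transpose_mul, Matrix.mul_assoc]
      _ = Matrix.trace (B * (Bᵀ * (Tᵀ * A) * (Aᵀ * T))) := Matrix.trace_mul_comm _ _
      _ = Matrix.trace (Q * (Tᵀ * (P * T))) := by
          congr 1; rw [hPA, hQB]; simp [Matrix.mul_assoc]
  rw [l1, l2]

lemma cross0 {d₁ d₂ k l k' l' : ℕ} (T : Matrix (Fin d₁) (Fin d₂) ℝ)
    (A : Matrix (Fin d₁) (Fin k) ℝ) (B : Matrix (Fin d₂) (Fin l) ℝ)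
    (C : Matrix (Fin d₁) (Fin k') ℝ) (D : Matrix (Fin d₂) (Fin l') ℝ)
    (h : Aᵀ * C = 0) :
    (A * Aᵀ * T * (B * Bᵀ))ᵀ * (C * Cᵀ * T * (D * Dᵀ)) = 0 := by
  have h' : ∀ (X : Matrix (Fin k') (Fin d₂) ℝ), Aᵀ * (C * X) = 0 := by
    intro X; rw [← Matrix.mul_assoc, h, Matrix.zero_mul]
  simp [Matrix.transpose_mul, Matrix.mul_assoc, h', Matrix.mul_zero]

/-- second moments of the linear-form statistic. -/
theorem stmt13 (d₁ d₂ r : ℕ) (hd₁ : 0 < d₁) (hd₂ : 0 < d₂)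
    (T : Matrix (Fin d₁) (Fin d₂) ℝ)
    (U : Matrix (Fin d₁) (Fin r) ℝ) (Uperp : Matrix (Fin d₁) (Fin (d₁ - r)) ℝ)
    (V : Matrix (Fin d₂) (Fin r) ℝ) (Vperp : Matrix (Fin d₂) (Fin (d₂ - r)) ℝ)
    (hU : Uᵀ * U = 1) (hV : Vᵀ * V = 1)
    (hUo : Uᵀ * Uperp = 0) (hVo : Vᵀ * Vperp = 0)
    (hUc : U * Uᵀ + Uperp * Uperpᵀ = 1)
    (hVc : V * Vᵀ + Vperp * Vperpᵀ = 1) :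
    ((1 / ((d₁ : ℝ) * d₂)) *
      ∑ j₁ : Fin d₁, ∑ j₂ : Fin d₂,
        (Matrix.trace ((Uperp * Uperpᵀ * Matrix.single j₁ j₂ (1 : ℝ) *
            V * Vᵀ)ᵀ * T)) ^ 2
      = frob (Uperpᵀ * T * V) ^ 2 / ((d₁ : ℝ) * d₂)) ∧
    ((1 / ((d₁ : ℝ) * d₂)) *
      ∑ j₁ : Fin d₁, ∑ j₂ : Fin d₂,
        (Matrix.trace ((Uperp * Uperpᵀ * Matrix.single j₁ j₂ (1 : ℝ) *
            V * Vᵀ)ᵀ * T) +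
          Matrix.trace ((U * Uᵀ * Matrix.single j₁ j₂ (1 : ℝ) *
            Vperp * Vperpᵀ)ᵀ * T)) ^ 2
      = (frob (Uperpᵀ * T * V) ^ 2 + frob (Uᵀ * T * Vperp) ^ 2) /
          ((d₁ : ℝ) * d₂)) := by
  set P := Uperp * Uperpᵀ with hPdef
  set Q := V * Vᵀ with hQdef
  set P' := U * Uᵀ with hP'def
  set Q' := Vperp * Vperpᵀ with hQ'def
  have hPT : Pᵀ = P := by simp [hPdef, Matrix.transpose_mul]
  have hQT : Qᵀ = Q := by simp [hQdef, Matrix.transpose_mul]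
  have hP'T : P'ᵀ = P' := by simp [hP'def, Matrix.transpose_mul]
  have hQ'T : Q'ᵀ = Q' := by simp [hQ'def, Matrix.transpose_mul]
  have hP' : P' * P' = P' := by
    rw [hP'def]
    calc U * Uᵀ * (U * Uᵀ) = U * (Uᵀ * U) * Uᵀ := by simp [Matrix.mul_assoc]
      _ = U * Uᵀ := by rw [hU, Matrix.mul_one]
  have hQ : Q * Q = Q := by
    rw [hQdef]
    calc V * Vᵀ * (V * Vᵀ) = V * (Vᵀ * V) * Vᵀ := by simp [Matrix.mul_assoc]
      _ = V * Vᵀ := by rw [hV, Matrix.mul_one]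
  have hPeq : P = 1 - P' := by rw [eq_sub_iff_add_eq, add_comm]; exact hUc
  have hQ'eq : Q' = 1 - Q := by rw [eq_sub_iff_add_eq, add_comm]; exact hVc
  have hP : P * P = P := by
    rw [hPeq, sub_mul, mul_sub, mul_sub, hP', Matrix.mul_one, Matrix.one_mul]
    simp
  have hQ' : Q' * Q' = Q' := by
    rw [hQ'eq, sub_mul, mul_sub, mul_sub, hQ, Matrix.mul_one, Matrix.one_mul]
    simp
  -- rewrite the trace terms as matrix entries
  have hterm : ∀ (j₁ : Fin d₁) (j₂ : Fin d₂),
      Matrix.trace ((Uperp * Uperpᵀ * Matrix.single j₁ j₂ (1 : ℝ) *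
          V * Vᵀ)ᵀ * T) = (P * T * Q) j₁ j₂ := by
    intro j₁ j₂
    have : Uperp * Uperpᵀ * Matrix.single j₁ j₂ (1 : ℝ) * V * Vᵀ
        = P * Matrix.single j₁ j₂ (1 : ℝ) * Q := by
      rw [hPdef, hQdef]; simp [Matrix.mul_assoc]
    rw [this, trace_term, hPT, hQT]
  have hterm' : ∀ (j₁ : Fin d₁) (j₂ : Fin d₂),
      Matrix.trace ((U * Uᵀ * Matrix.single j₁ j₂ (1 : ℝ) *
          Vperp * Vperpᵀ)ᵀ * T) = (P' * T * Q') j₁ j₂ := by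
    intro j₁ j₂
    have : U * Uᵀ * Matrix.single j₁ j₂ (1 : ℝ) * Vperp * Vperpᵀ
        = P' * Matrix.single j₁ j₂ (1 : ℝ) * Q' := by
      rw [hP'def, hQ'def]; simp [Matrix.mul_assoc]
    rw [this, trace_term, hP'T, hQ'T]
  have hsumM : ∑ j₁ : Fin d₁, ∑ j₂ : Fin d₂, ((P * T * Q) j₁ j₂) ^ 2
      = frob (Uperpᵀ * T * V) ^ 2 := by
    rw [sum_sq_eq_trace, frob_sq_trace]
    exact key_trace T Uperp V P Q hPT hQT hP hQ hPdef hQdef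
  have hsumN : ∑ j₁ : Fin d₁, ∑ j₂ : Fin d₂, ((P' * T * Q') j₁ j₂) ^ 2
      = frob (Uᵀ * T * Vperp) ^ 2 := by
    rw [sum_sq_eq_trace, frob_sq_trace]
    exact key_trace T U Vperp P' Q' hP'T hQ'T hP' hQ' hP'def hQ'def
  have hUoT : Uperpᵀ * U = 0 := by
    have := congrArg Matrix.transpose hUo
    simpa [Matrix.transpose_mul] using this
  have hcross : ∑ j₁ : Fin d₁, ∑ j₂ : Fin d₂,
      ((P * T * Q) j₁ j₂) * ((P' * T * Q') j₁ j₂) = 0 := by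
    rw [sum_mul_eq_trace]
    have : (P * T * Q)ᵀ * (P' * T * Q') = 0 := by
      rw [hPdef, hQdef, hP'def, hQ'def]
      exact cross0 T Uperp V U Vperp hUoT
    rw [this, Matrix.trace_zero]
  constructor
  · have hS : ∑ j₁ : Fin d₁, ∑ j₂ : Fin d₂,
        (Matrix.trace ((Uperp * Uperpᵀ * Matrix.single j₁ j₂ (1 : ℝ) *
            V * Vᵀ)ᵀ * T)) ^ 2 = frob (Uperpᵀ * T * V) ^ 2 := by
      simp only [hterm]; exact hsumM
    rw [hS]; ring
  · have hS : ∑ j₁ : Fin d₁, ∑ j₂ : Fin d₂,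
        (Matrix.trace ((Uperp * Uperpᵀ * Matrix.single j₁ j₂ (1 : ℝ) *
            V * Vᵀ)ᵀ * T) +
          Matrix.trace ((U * Uᵀ * Matrix.single j₁ j₂ (1 : ℝ) *
            Vperp * Vperpᵀ)ᵀ * T)) ^ 2
        = frob (Uperpᵀ * T * V) ^ 2 + frob (Uᵀ * T * Vperp) ^ 2 := by
      simp only [hterm, hterm', add_sq]
      rw [Finset.sum_congr rfl (fun j₁ _ => Finset.sum_add_distrib),
        Finset.sum_congr rfl (fun j₁ _ =>
          congrArg (· + _) Finset.sum_add_distrib),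
        Finset.sum_add_distrib, Finset.sum_add_distrib, hsumM, hsumN]
      have h2 : ∑ j₁ : Fin d₁, ∑ j₂ : Fin d₂,
          2 * (P * T * Q) j₁ j₂ * (P' * T * Q') j₁ j₂ = 0 := by
        have : ∀ j₁ : Fin d₁, ∀ j₂ : Fin d₂,
            2 * (P * T * Q) j₁ j₂ * (P' * T * Q') j₁ j₂
              = 2 * ((P * T * Q) j₁ j₂ * (P' * T * Q') j₁ j₂) := by
          intro j₁ j₂; ring
        simp only [this, ← Finset.mul_sum]
        rw [hcross]; ring
      rw [h2]; ring
    rw [hS]; ring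
end

section
/- Let U, Û ∈ ℝ^{d₁×r} and V, V̂ ∈ ℝ^{d₂×r} all have orthonormal columns, and let Z ∈ ℝ^{d₁×d₂}. Then ‖ÛÛᵀ Z V̂V̂ᵀ‖_max ≤ ‖UUᵀ Z VVᵀ‖_max + ‖Z‖·(‖ÛÛᵀ−UUᵀ‖_{2,max}·‖V‖_{2,max} + ‖V̂V̂ᵀ−VVᵀ‖_{2,max}·‖U‖_{2,max} + ‖ÛÛᵀ−UUᵀ‖_{2,max}·‖V̂V̂ᵀ−VVᵀ‖_{2,max}). -/
open Matrix BigOperators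

lemma twoMax_nonneg {m n : Type*} [Fintype m] [Fintype n] (A : Matrix m n ℝ) :
    0 ≤ twoMax A :=
  Real.iSup_nonneg fun _ => Real.sqrt_nonneg _

lemma maxN_nonneg {m n : Type*} [Fintype m] [Fintype n] (A : Matrix m n ℝ) :
    0 ≤ maxN A :=
  Real.iSup_nonneg fun _ => Real.iSup_nonneg fun _ => abs_nonneg _

lemma maxN_le {m n : Type*} [Fintype m] [Fintype n] {A : Matrix m n ℝ} {c : ℝ}
    (hc : 0 ≤ c) (h : ∀ i j, |A i j| ≤ c) : maxN A ≤ c :=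
  Real.iSup_le (fun i => Real.iSup_le (h i) hc) hc

lemma abs_le_maxN {m n : Type*} [Fintype m] [Fintype n] (A : Matrix m n ℝ) (i : m) (j : n) :
    |A i j| ≤ maxN A := by
  have h1 : |A i j| ≤ ⨆ j, |A i j| :=
    le_ciSup (f := fun j => |A i j|) (Set.Finite.bddAbove (Set.finite_range _)) j
  have h2 : (⨆ j, |A i j|) ≤ maxN A :=
    le_ciSup (f := fun i => ⨆ j, |A i j|) (Set.Finite.bddAbove (Set.finite_range _)) i
  exact h1.trans h2

lemma sqrt_row_le_twoMax {m n : Type*} [Fintype m] [Fintype n] (A : Matrix m n ℝ) (i : m) :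
    Real.sqrt (∑ j, (A i j) ^ 2) ≤ twoMax A :=
  le_ciSup (f := fun i => Real.sqrt (∑ j, (A i j) ^ 2))
    (Set.Finite.bddAbove (Set.finite_range _)) i

/-- Cauchy–Schwarz + operator norm bound. -/
lemma key {d₁ d₂ : ℕ} (Z : Matrix (Fin d₁) (Fin d₂) ℝ) (u : Fin d₁ → ℝ) (b : Fin d₂ → ℝ) :
    |∑ k, u k * (Z *ᵥ b) k| ≤
      opN Z * (Real.sqrt (∑ k, (u k) ^ 2) * Real.sqrt (∑ l, (b l) ^ 2)) := by
  set x : EuclideanSpace ℝ (Fin d₂) := (WithLp.equiv 2 _).symm b with hx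
  set y : EuclideanSpace ℝ (Fin d₁) := (WithLp.equiv 2 _).symm u with hy
  have hnx : ‖x‖ = Real.sqrt (∑ l, (b l) ^ 2) := by
    rw [EuclideanSpace.norm_eq]
    congr 1
    exact Finset.sum_congr rfl fun l _ => by
      simp [hx, Real.norm_eq_abs, sq_abs]
  have hny : ‖y‖ = Real.sqrt (∑ k, (u k) ^ 2) := by
    rw [EuclideanSpace.norm_eq]
    congr 1
    exact Finset.sum_congr rfl fun k _ => by
      simp [hy, Real.norm_eq_abs, sq_abs]
  have hinner : ∑ k, u k * (Z *ᵥ b) k = (inner ℝ y (Matrix.toEuclideanLin Z x) : ℝ) := by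
    rw [PiLp.inner_apply]
    refine Finset.sum_congr rfl fun k _ => ?_
    simp [Matrix.toEuclideanLin_apply, hx, hy, mul_comm, RCLike.inner_apply]
  rw [hinner]
  calc |(inner ℝ y (Matrix.toEuclideanLin Z x) : ℝ)| ≤ ‖y‖ * ‖Matrix.toEuclideanLin Z x‖ :=
        abs_real_inner_le_norm _ _
    _ ≤ ‖y‖ * (opN Z * ‖x‖) := by
        refine mul_le_mul_of_nonneg_left ?_ (norm_nonneg _)
        have := (LinearMap.toContinuousLinearMap (Matrix.toEuclideanLin Z)).le_opNorm x
        simpa [opN] using this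
    _ = opN Z * (‖y‖ * ‖x‖) := by ring
    _ = opN Z * (Real.sqrt (∑ k, (u k) ^ 2) * Real.sqrt (∑ l, (b l) ^ 2)) := by
        rw [hnx, hny]

lemma entry_eq {d₁ d₂ : ℕ} (A : Matrix (Fin d₁) (Fin d₁) ℝ) (Z : Matrix (Fin d₁) (Fin d₂) ℝ)
    (B : Matrix (Fin d₂) (Fin d₂) ℝ) (i : Fin d₁) (j : Fin d₂) :
    (A * Z * B) i j = ∑ k, A i k * (Z *ᵥ (fun l => B l j)) k := by
  simp only [Matrix.mul_apply, Matrix.mulVec, dotProduct, Finset.sum_mul,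
    Finset.mul_sum]
  rw [Finset.sum_comm]
  exact Finset.sum_congr rfl fun k _ => Finset.sum_congr rfl fun l _ => by ring

/-- For orthonormal `U`, the squared row sums of `U * Uᵀ` collapse. -/
lemma proj_row_sq {d r : ℕ} (U : Matrix (Fin d) (Fin r) ℝ) (hU : Uᵀ * U = 1) (i : Fin d) :
    ∑ l, ((U * Uᵀ) i l) ^ 2 = ∑ k, (U i k) ^ 2 := by
  have hsym : (U * Uᵀ)ᵀ = U * Uᵀ := by
    rw [Matrix.transpose_mul, Matrix.transpose_transpose]
  have hidem : (U * Uᵀ) * (U * Uᵀ) = U * Uᵀ := by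
    rw [Matrix.mul_assoc, ← Matrix.mul_assoc Uᵀ, hU, Matrix.one_mul]
  calc ∑ l, ((U * Uᵀ) i l) ^ 2 = ∑ l, (U * Uᵀ) i l * (U * Uᵀ) l i := by
        refine Finset.sum_congr rfl fun l _ => ?_
        have : (U * Uᵀ) l i = (U * Uᵀ) i l := by
          conv_lhs => rw [← hsym, Matrix.transpose_apply]
        rw [this]; ring
    _ = ((U * Uᵀ) * (U * Uᵀ)) i i := (Matrix.mul_apply).symm
    _ = (U * Uᵀ) i i := by rw [hidem]
    _ = ∑ k, (U i k) ^ 2 := by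
        rw [Matrix.mul_apply]
        exact Finset.sum_congr rfl fun k _ => by simp [Matrix.transpose_apply]; ring

lemma proj_col_sq {d r : ℕ} (U : Matrix (Fin d) (Fin r) ℝ) (hU : Uᵀ * U = 1) (j : Fin d) :
    ∑ l, ((U * Uᵀ) l j) ^ 2 = ∑ k, (U j k) ^ 2 := by
  have hsym : (U * Uᵀ)ᵀ = U * Uᵀ := by
    rw [Matrix.transpose_mul, Matrix.transpose_transpose]
  have : ∀ l, (U * Uᵀ) l j = (U * Uᵀ) j l := fun l => by
    conv_lhs => rw [← hsym, Matrix.transpose_apply]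
  simp_rw [this]
  exact proj_row_sq U hU j

/-- max-norm bound for the projected matrix. -/
theorem stmt17 (d₁ d₂ r : ℕ)
    (U Uhat : Matrix (Fin d₁) (Fin r) ℝ)
    (V Vhat : Matrix (Fin d₂) (Fin r) ℝ)
    (Z : Matrix (Fin d₁) (Fin d₂) ℝ)
    (hU : Uᵀ * U = 1) (hUhat : Uhatᵀ * Uhat = 1)
    (hV : Vᵀ * V = 1) (hVhat : Vhatᵀ * Vhat = 1) :
    maxN (Uhat * Uhatᵀ * Z * (Vhat * Vhatᵀ)) ≤
      maxN (U * Uᵀ * Z * (V * Vᵀ)) +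
        opN Z * (twoMax (Uhat * Uhatᵀ - U * Uᵀ) * twoMax V +
          twoMax (Vhat * Vhatᵀ - V * Vᵀ) * twoMax U +
          twoMax (Uhat * Uhatᵀ - U * Uᵀ) * twoMax (Vhat * Vhatᵀ - V * Vᵀ)) := by
  set E := Uhat * Uhatᵀ - U * Uᵀ with hE
  set F := Vhat * Vhatᵀ - V * Vᵀ with hF
  have hopN : (0:ℝ) ≤ opN Z := norm_nonneg _
  have htE := twoMax_nonneg E
  have htF := twoMax_nonneg F
  have htU := twoMax_nonneg U
  have htV := twoMax_nonneg V
  have hFsym : Fᵀ = F := by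
    rw [hF, Matrix.transpose_sub, Matrix.transpose_mul, Matrix.transpose_mul,
      Matrix.transpose_transpose, Matrix.transpose_transpose]
  have hRHSnn : (0:ℝ) ≤ maxN (U * Uᵀ * Z * (V * Vᵀ)) +
      opN Z * (twoMax E * twoMax V + twoMax F * twoMax U + twoMax E * twoMax F) := by
    have : (0:ℝ) ≤ twoMax E * twoMax V + twoMax F * twoMax U + twoMax E * twoMax F := by
      positivity
    exact add_nonneg (maxN_nonneg _) (mul_nonneg hopN this)
  refine maxN_le hRHSnn ?_
  intro i j
  have hdecomp : Uhat * Uhatᵀ * Z * (Vhat * Vhatᵀ) =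
      U * Uᵀ * Z * (V * Vᵀ) + E * Z * (V * Vᵀ) + U * Uᵀ * Z * F + E * Z * F := by
    rw [hE, hF]
    simp only [Matrix.sub_mul, Matrix.mul_sub]
    abel
  have hEntry : (Uhat * Uhatᵀ * Z * (Vhat * Vhatᵀ)) i j =
      (U * Uᵀ * Z * (V * Vᵀ)) i j + (E * Z * (V * Vᵀ)) i j + (U * Uᵀ * Z * F) i j
        + (E * Z * F) i j := by
    rw [hdecomp]; rfl
  -- bound each term
  have b1 : |(U * Uᵀ * Z * (V * Vᵀ)) i j| ≤ maxN (U * Uᵀ * Z * (V * Vᵀ)) :=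
    abs_le_maxN _ i j
  have hFcol : Real.sqrt (∑ l, (F l j) ^ 2) ≤ twoMax F := by
    have : ∀ l, F l j = F j l := fun l => by
      conv_lhs => rw [← hFsym, Matrix.transpose_apply]
    simp_rw [this]
    exact sqrt_row_le_twoMax F j
  have hVcol : Real.sqrt (∑ l, ((V * Vᵀ) l j) ^ 2) ≤ twoMax V := by
    rw [proj_col_sq V hV j]
    exact sqrt_row_le_twoMax V j
  have hUrow : Real.sqrt (∑ k, ((U * Uᵀ) i k) ^ 2) ≤ twoMax U := by
    rw [proj_row_sq U hU i]
    exact sqrt_row_le_twoMax U i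
  have hErow : Real.sqrt (∑ k, (E i k) ^ 2) ≤ twoMax E := sqrt_row_le_twoMax E i
  have b2 : |(E * Z * (V * Vᵀ)) i j| ≤ opN Z * (twoMax E * twoMax V) := by
    rw [entry_eq]
    refine (key Z (E i) (fun l => (V * Vᵀ) l j)).trans ?_
    refine mul_le_mul_of_nonneg_left ?_ hopN
    exact mul_le_mul hErow hVcol (Real.sqrt_nonneg _) htE
  have b3 : |(U * Uᵀ * Z * F) i j| ≤ opN Z * (twoMax F * twoMax U) := by
    rw [entry_eq]
    refine (key Z ((U * Uᵀ) i) (fun l => F l j)).trans ?_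
    rw [mul_comm (twoMax F)]
    refine mul_le_mul_of_nonneg_left ?_ hopN
    exact mul_le_mul hUrow hFcol (Real.sqrt_nonneg _) htU
  have b4 : |(E * Z * F) i j| ≤ opN Z * (twoMax E * twoMax F) := by
    rw [entry_eq]
    refine (key Z (E i) (fun l => F l j)).trans ?_
    refine mul_le_mul_of_nonneg_left ?_ hopN
    exact mul_le_mul hErow hFcol (Real.sqrt_nonneg _) htE
  calc |(Uhat * Uhatᵀ * Z * (Vhat * Vhatᵀ)) i j|
      ≤ |(U * Uᵀ * Z * (V * Vᵀ)) i j| + |(E * Z * (V * Vᵀ)) i j| + |(U * Uᵀ * Z * F) i j|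
        + |(E * Z * F) i j| := by
        rw [hEntry]
        exact (abs_add_le _ _).trans (add_le_add ((abs_add_le _ _).trans
          (add_le_add (abs_add_le _ _) le_rfl)) le_rfl)
    _ ≤ maxN (U * Uᵀ * Z * (V * Vᵀ)) +
        opN Z * (twoMax E * twoMax V + twoMax F * twoMax U + twoMax E * twoMax F) := by
        have := add_le_add (add_le_add (add_le_add b1 b2) b3) b4
        linarith
end
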